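/- arXiv:0709.0142 — 2 statements merged into one kernel-verified Lean document; each statement's English description precedes it below -/
import Mathlib

section
/- For every integer ℓ ≥ 2, G(ℓ) = G(ℓ−1) J_z + ζ(J_z^{ℓ−2}) − (1/λ) J_z^ℓ, where G(ℓ) = (i/λ)(J_x J_z^{ℓ−1} J_y − J_y J_z^{ℓ−1} J_x). -/
open Matrix Complex Kronecker
open scoped ComplexOrder

noncomputable section

/-- spin value j = (d-1)/2 -/
def jr (d : ℕ) : ℝ := ((d : ℝ) - 1) / 2

/-- λ = j(j+1) = (d²-1)/4 -/
def lam (d : ℕ) : ℝ := ((d : ℝ) ^ 2 - 1) / 4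

/-- angular momentum operator J_z -/
def Jz (d : ℕ) : Matrix (Fin d) (Fin d) ℂ :=
  Matrix.diagonal (fun m => ((m : ℂ) - ((d : ℂ) - 1) / 2))

/-- raising operator J_+ -/
def Jp (d : ℕ) : Matrix (Fin d) (Fin d) ℂ :=
  Matrix.of (fun a b : Fin d =>
    if (a : ℕ) = (b : ℕ) + 1 then
      (Real.sqrt (((b : ℕ) + 1) * ((d : ℝ) - 1 - (b : ℕ))) : ℂ)
    else 0)

/-- lowering operator J_- -/
def Jm (d : ℕ) : Matrix (Fin d) (Fin d) ℂ := (Jp d)ᴴ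

/-- J_x -/
def Jx (d : ℕ) : Matrix (Fin d) (Fin d) ℂ := (2 : ℂ)⁻¹ • (Jp d + Jm d)

/-- J_y -/
def Jy (d : ℕ) : Matrix (Fin d) (Fin d) ℂ := (2 * Complex.I)⁻¹ • (Jp d - Jm d)

/-- the superoperator ζ -/
def zeta (d : ℕ) (X : Matrix (Fin d) (Fin d) ℂ) : Matrix (Fin d) (Fin d) ℂ :=
  ((lam d : ℂ))⁻¹ • (Jx d * X * Jx d + Jy d * X * Jy d + Jz d * X * Jz d)

/-- n-fold composition ζ^∘n -/
def zetaIter (d : ℕ) (n : ℕ) (X : Matrix (Fin d) (Fin d) ℂ) : Matrix (Fin d) (Fin d) ℂ :=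
  (zeta d)^[n] X

/-- rotation e^{-iθ J} -/
def rot (d : ℕ) (K : Matrix (Fin d) (Fin d) ℂ) (θ : ℝ) : Matrix (Fin d) (Fin d) ℂ :=
  NormedSpace.exp ((-Complex.I * (θ : ℂ)) • K)

/-- rotation covariance of a linear map with respect to all three generators -/
def RotCovariant (d : ℕ)
    (ξ : Matrix (Fin d) (Fin d) ℂ →ₗ[ℂ] Matrix (Fin d) (Fin d) ℂ) : Prop :=
  ∀ K ∈ ({Jx d, Jy d, Jz d} : Set (Matrix (Fin d) (Fin d) ℂ)), ∀ (θ : ℝ),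
    ∀ X : Matrix (Fin d) (Fin d) ℂ,
      ξ (rot d K θ * X * rot d K (-θ)) = rot d K θ * ξ X * rot d K (-θ)

/-- positivity of a map -/
def PosMap (d : ℕ)
    (ξ : Matrix (Fin d) (Fin d) ℂ →ₗ[ℂ] Matrix (Fin d) (Fin d) ℂ) : Prop :=
  ∀ X : Matrix (Fin d) (Fin d) ℂ, X.PosSemidef → (ξ X).PosSemidef

end

/-- G(ℓ) = (i/λ)(J_x J_z^{ℓ-1} J_y − J_y J_z^{ℓ-1} J_x) -/
noncomputable def Gmap (d : ℕ) (ℓ : ℕ) : Matrix (Fin d) (Fin d) ℂ :=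
  (Complex.I / (lam d : ℂ)) •
    (Jx d * (Jz d) ^ (ℓ - 1) * Jy d - Jy d * (Jz d) ^ (ℓ - 1) * Jx d)

/-
Write `J_± = J_x ± i J_y`. Since `J_z` is diagonal and `J_+` shifts `m` to `m + 1`, the ladder relations
`[J_z, J_±] = ± J_±` give `J_x J_z = J_z J_x - i J_y` and `J_y J_z = J_z J_y + i J_x`. Moving the trailing
`J_z` of `G(ℓ-1) J_z` to the left with these relations produces `G(ℓ)` together with
`-(1/λ)(J_x J_z^{ℓ-2} J_x + J_y J_z^{ℓ-2} J_y)`, which is `ζ(J_z^{ℓ-2})` with its `J_z`-term removed.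
-/

section LadderAlgebra

variable {A : Type*} [Ring A] [Algebra ℂ A]

theorem commRel_of_ladder {z p m : A} (hp : z * p = p * z + p) (hm : z * m = m * z - m) :
    ((2 : ℂ)⁻¹ • (p + m)) * z = z * ((2 : ℂ)⁻¹ • (p + m)) - I • ((2 * I)⁻¹ • (p - m)) ∧
      ((2 * I)⁻¹ • (p - m)) * z = z * ((2 * I)⁻¹ • (p - m)) + I • ((2 : ℂ)⁻¹ • (p + m)) := by
  have hI : I * (2 * I)⁻¹ = (2 : ℂ)⁻¹ := by field_simp
  have hI' : I * (2 : ℂ)⁻¹ = -(2 * I)⁻¹ := by field_simp; rw [I_sq]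
  simp only [smul_mul_assoc, mul_smul_comm, add_mul, mul_add, sub_mul, mul_sub, hp, hm,
    smul_smul, hI, hI']
  constructor <;> module

theorem sandwich_pow_mul_of_commRel {x y z : A} (hx : x * z = z * x - I • y)
    (hy : y * z = z * y + I • x) (n : ℕ) :
    (x * z ^ n * y - y * z ^ n * x) * z =
      (x * z ^ (n + 1) * y - y * z ^ (n + 1) * x) + I • (x * z ^ n * x + y * z ^ n * y) := by
  rw [sub_mul, mul_assoc (x * z ^ n), hy, mul_assoc (y * z ^ n), hx]
  simp only [mul_add, mul_sub, mul_smul_comm, pow_succ, mul_assoc, smul_add]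
  abel

end LadderAlgebra

theorem Jz_mul_Jp (d : ℕ) : Jz d * Jp d = Jp d * Jz d + Jp d := by
  ext a b
  simp only [Jz, Jp, diagonal_mul, mul_diagonal, Matrix.add_apply, of_apply]
  split_ifs with h
  · rw [show (a : ℂ) = b + 1 by exact_mod_cast h]
    ring
  · simp

theorem Jz_mul_Jm (d : ℕ) : Jz d * Jm d = Jm d * Jz d - Jm d := by
  ext a b
  simp only [Jz, Jp, Jm, diagonal_mul, mul_diagonal, Matrix.sub_apply, conjTranspose_apply, of_apply]
  split_ifs with h
  · rw [show (b : ℂ) = a + 1 by exact_mod_cast h]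
    ring
  · simp

theorem Jx_mul_Jz (d : ℕ) : Jx d * Jz d = Jz d * Jx d - I • Jy d :=
  (commRel_of_ladder (Jz_mul_Jp d) (Jz_mul_Jm d)).1

theorem Jy_mul_Jz (d : ℕ) : Jy d * Jz d = Jz d * Jy d + I • Jx d :=
  (commRel_of_ladder (Jz_mul_Jp d) (Jz_mul_Jm d)).2

theorem stmt_5_general (d : ℕ) (ℓ : ℕ) (hℓ : 2 ≤ ℓ) :
    Gmap d ℓ = Gmap d (ℓ - 1) * Jz d + zeta d ((Jz d) ^ (ℓ - 2))
      - ((lam d : ℂ))⁻¹ • (Jz d) ^ ℓ := by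
  obtain ⟨n, rfl⟩ : ∃ n, ℓ = n + 2 := ⟨ℓ - 2, by omega⟩
  have hI : I / (lam d : ℂ) * I = -(lam d : ℂ)⁻¹ := by
    rw [div_mul_eq_mul_div, I_mul_I, neg_div, one_div]
  have hJz : Jz d * Jz d ^ n * Jz d = Jz d ^ (n + 2) := by
    rw [← pow_succ', ← pow_succ]
  simp only [Gmap, zeta, show n + 2 - 1 = n + 1 from rfl, Nat.add_sub_cancel,
    smul_mul_assoc, sandwich_pow_mul_of_commRel (Jx_mul_Jz d) (Jy_mul_Jz d), hJz, smul_add,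
    smul_smul, hI]
  module

theorem stmt_5 (d : ℕ) (hd : 2 ≤ d) (ℓ : ℕ) (hℓ : 2 ≤ ℓ) :
    Gmap d ℓ = Gmap d (ℓ - 1) * Jz d + zeta d ((Jz d) ^ (ℓ - 2))
      - ((lam d : ℂ))⁻¹ • (Jz d) ^ ℓ :=
  stmt_5_general d ℓ hℓ
end

section
/- For each k ∈ {x,y,z}, the entrywise complex conjugate of the spin-j angular momentum matrix satisfies conj(J_k) = − e^{−iπJ_y} J_k e^{iπJ_y}. -/
/-! Entrywise conjugation fixes `J_x` and `J_z`, whose entries are real, and negates `J_y`, whose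
entries are purely imaginary. On the other side, `A = -i J_y` satisfies `[A, J_x] = -J_z` and
`[A, J_z] = J_x`, so `t ↦ e^{tA} J_x e^{-tA}` solves the rotation equation and equals
`cos t • J_x - sin t • J_z`; at `t = π` conjugation by `e^{πA} = e^{-iπJ_y}` negates `J_x`, and
likewise `J_z`, while it fixes `J_y`, which commutes with `A`. The commutators come from
`[J_z, J_±] = ±J_±` and `[J_+, J_-] = 2 J_z`, where the diagonal products `J_+ J_-` and `J_- J_+`
have entries `m (d - m)` and `(m + 1) (d - 1 - m)`. -/

open Matrix Complex Kronecker
open scoped ComplexOrder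

open NormedSpace

section ExpConjugation

variable {𝔸 : Type*} [NormedRing 𝔸] [NormedAlgebra ℝ 𝔸] [CompleteSpace 𝔸] {A P Q : 𝔸}

theorem exp_smul_mul_mul_exp_neg_smul_of_commutators (hP : A * P - P * A = -Q)
    (hQ : A * Q - Q * A = P) (t : ℝ) :
    exp (t • A) * P * exp (-(t • A)) = Real.cos t • P - Real.sin t • Q := by
  -- Mathlib's lemmas on `exp` of sums are stated for normed `ℚ`-algebras.
  let +nondep : NormedAlgebra ℚ 𝔸 := NormedAlgebra.restrictScalars ℚ ℝ 𝔸
  set M : ℝ → 𝔸 := fun s => Real.cos s • P - Real.sin s • Q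
  set F : ℝ → 𝔸 := fun s => exp (-(s • A)) * M s * exp (s • A)
  have hF : ∀ s, HasDerivAt F 0 s := by
    intro s
    have hM : HasDerivAt M (-Real.sin s • P - Real.cos s • Q) s :=
      ((Real.hasDerivAt_cos s).smul_const P).sub ((Real.hasDerivAt_sin s).smul_const Q)
    have hneg : HasDerivAt (fun u : ℝ => exp (-(u • A))) (exp (-(s • A)) * -A) s := by
      simpa only [← neg_smul, smul_neg] using hasDerivAt_exp_smul_const (𝕂 := ℝ) (-A) s
    have hlie : M s * A - A * M s + (-Real.sin s • P - Real.cos s • Q) = 0 := by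
      have hbracket : A * M s - M s * A =
          Real.cos s • (A * P - P * A) - Real.sin s • (A * Q - Q * A) := by
        simp only [M, mul_sub, sub_mul, mul_smul_comm, smul_mul_assoc, smul_sub]
        abel
      rw [← neg_sub, hbracket, hP, hQ]
      module
    have hcomm : A * exp (s • A) = exp (s • A) * A :=
      ((Commute.refl A).smul_right s).exp_right.eq
    refine ((hneg.mul hM).mul (hasDerivAt_exp_smul_const (𝕂 := ℝ) A s)).congr_deriv ?_
    rw [Pi.mul_apply, ← hcomm]
    calc _ = exp (-(s • A)) * (M s * A - A * M s + (-Real.sin s • P - Real.cos s • Q)) *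
          exp (s • A) := by noncomm_ring
      _ = 0 := by rw [hlie, mul_zero, zero_mul]
  have hconst := is_const_of_deriv_eq_zero (fun s => (hF s).differentiableAt)
    (fun s => (hF s).deriv) t 0
  have hinv : exp (t • A) * exp (-(t • A)) = 1 := by
    rw [← NormedSpace.exp_add_of_commute (Commute.refl _).neg_right, add_neg_cancel,
      NormedSpace.exp_zero]
  have hFt : F t = P := by
    rw [hconst]
    simp [F, M]
  calc exp (t • A) * P * exp (-(t • A))
      = exp (t • A) * F t * exp (-(t • A)) := by rw [hFt]
    _ = M t := by
      simp only [F, ← mul_assoc, hinv, one_mul]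
      rw [mul_assoc, hinv, mul_one]

theorem exp_pi_smul_mul_mul_exp_neg_pi_smul_of_commutators (hP : A * P - P * A = -Q)
    (hQ : A * Q - Q * A = P) : exp (Real.pi • A) * P * exp (-(Real.pi • A)) = -P := by
  rw [exp_smul_mul_mul_exp_neg_smul_of_commutators hP hQ, Real.cos_pi, Real.sin_pi, neg_one_smul,
    zero_smul, sub_zero]

end ExpConjugation

section SpinMatrices

variable {d : ℕ}

theorem conj_Jp_apply (a b : Fin d) : starRingEnd ℂ (Jp d a b) = Jp d a b := by
  simp only [Jp, of_apply]
  split_ifs <;> simp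

theorem ofReal_sqrt_ladder_mul_self {a : ℕ} (ha : a < d) :
    (√((a + 1) * ((d : ℝ) - 1 - a)) : ℂ) * √((a + 1) * ((d : ℝ) - 1 - a))
      = (a + 1) * ((d : ℂ) - 1 - a) := by
  have ha' : (a : ℝ) + 1 ≤ d := by exact_mod_cast ha
  rw [← Complex.ofReal_mul, Real.mul_self_sqrt (by nlinarith)]
  push_cast
  ring

theorem Jp_apply_row_zero (hd : 0 < d) (c : Fin d) : Jp d ⟨0, hd⟩ c = 0 := by
  simp [Jp]

theorem Jp_apply_row_succ {a : ℕ} (ha : a + 1 < d) (c : Fin d) :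
    Jp d ⟨a + 1, ha⟩ c =
      if c = ⟨a, by omega⟩ then (√((a + 1) * ((d : ℝ) - 1 - a)) : ℂ) else 0 := by
  simp only [Jp, of_apply, Fin.ext_iff, Nat.add_right_cancel_iff, eq_comm (a := (c : ℕ))]
  split_ifs with h <;> simp [h]

theorem Jp_mul_Jm : Jp d * Jm d = diagonal fun a : Fin d => ((a : ℕ) : ℂ) * (d - (a : ℕ)) := by
  ext a b
  simp only [mul_apply, Jm, conjTranspose_apply, RCLike.star_def, conj_Jp_apply]
  obtain ⟨_ | a, ha⟩ := a
  · simp [Jp_apply_row_zero, diagonal_apply]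
  · simp only [Jp_apply_row_succ ha, ite_mul, zero_mul, Finset.sum_ite_eq', Finset.mem_univ,
      if_true]
    simp only [Jp, of_apply, diagonal_apply, Fin.ext_iff, eq_comm (a := a + 1)]
    split_ifs with h
    · rw [ofReal_sqrt_ladder_mul_self (by omega)]
      push_cast
      ring
    · rw [mul_zero]

theorem Jp_apply_col_last (c : Fin d) {b : Fin d} (hb : (b : ℕ) + 1 = d) : Jp d c b = 0 := by
  simp only [Jp, of_apply]
  exact if_neg (by omega)

theorem Jp_apply_col_of_succ_lt (c : Fin d) {b : ℕ} (hb : b + 1 < d) :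
    Jp d c ⟨b, by omega⟩ =
      if c = ⟨b + 1, hb⟩ then (√((b + 1) * ((d : ℝ) - 1 - b)) : ℂ) else 0 := by
  simp only [Jp, of_apply, Fin.ext_iff]

theorem Jm_mul_Jp :
    Jm d * Jp d = diagonal fun a : Fin d => ((a : ℕ) + 1 : ℂ) * (d - 1 - (a : ℕ)) := by
  ext a b
  simp only [mul_apply, Jm, conjTranspose_apply, RCLike.star_def, conj_Jp_apply]
  obtain ⟨b, hb⟩ := b
  rcases (show b + 1 < d ∨ b + 1 = d by omega) with hb' | hb'
  · simp only [Jp_apply_col_of_succ_lt _ hb', mul_ite, mul_zero, Finset.sum_ite_eq',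
      Finset.mem_univ, if_true, Jp_apply_row_succ hb', ite_mul, zero_mul]
    simp only [diagonal_apply, Fin.ext_iff]
    split_ifs with h
    · rw [ofReal_sqrt_ladder_mul_self (by omega), h]
    · rfl
  · simp only [Jp_apply_col_last _ (b := ⟨b, hb⟩) hb', mul_zero, Finset.sum_const_zero,
      diagonal_apply, Fin.ext_iff]
    split_ifs with h
    · rw [h, ← hb']
      push_cast
      ring
    · rfl

theorem Jp_mul_Jm_sub : Jp d * Jm d - Jm d * Jp d = (2 : ℂ) • Jz d := by
  rw [Jp_mul_Jm, Jm_mul_Jp, Jz, diagonal_sub, ← diagonal_smul]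
  congr 1
  funext a
  simp only [Pi.smul_apply, smul_eq_mul]
  ring

theorem Jz_mul_Jp_sub : Jz d * Jp d - Jp d * Jz d = Jp d := by
  ext a b
  simp only [Matrix.sub_apply, Jz, diagonal_mul, mul_diagonal, Jp, of_apply]
  split_ifs with h
  · rw [h]
    push_cast
    ring
  · ring

theorem Jz_mul_Jm_sub : Jz d * Jm d - Jm d * Jz d = -Jm d := by
  ext a b
  simp only [Matrix.sub_apply, Matrix.neg_apply, Jz, diagonal_mul, mul_diagonal, Jm,
    conjTranspose_apply, Jp, of_apply]
  split_ifs with h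
  · rw [h]
    push_cast
    ring
  · simp

theorem Jx_mul_Jy_sub : Jx d * Jy d - Jy d * Jx d = Complex.I • Jz d := by
  have hexpand : (Jp d + Jm d) * (Jp d - Jm d) - (Jp d - Jm d) * (Jp d + Jm d)
      = -(2 : ℂ) • (Jp d * Jm d - Jm d * Jp d) := by
    rw [neg_smul, two_smul]
    noncomm_ring
  rw [Jx, Jy, smul_mul_smul_comm, smul_mul_smul_comm, mul_comm (2 : ℂ)⁻¹, ← smul_sub, hexpand,
    Jp_mul_Jm_sub, smul_smul, smul_smul]
  congr 1
  field_simp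
  simp

theorem Jy_mul_Jz_sub : Jy d * Jz d - Jz d * Jy d = Complex.I • Jx d := by
  have hexpand : (Jp d - Jm d) * Jz d - Jz d * (Jp d - Jm d)
      = -(Jz d * Jp d - Jp d * Jz d) + (Jz d * Jm d - Jm d * Jz d) := by
    noncomm_ring
  rw [Jy, Jx, smul_mul_assoc, mul_smul_comm, ← smul_sub, hexpand, Jz_mul_Jp_sub, Jz_mul_Jm_sub,
    ← neg_add, smul_neg, ← neg_smul, smul_smul]
  congr 1
  field_simp
  simp

theorem Jx_map_conj : (Jx d).map (starRingEnd ℂ) = Jx d := by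
  ext a b
  simp [Jx, Jm, conj_Jp_apply, map_ofNat, mul_add]

theorem Jy_map_conj : (Jy d).map (starRingEnd ℂ) = -Jy d := by
  ext a b
  simp [Jy, Jm, conj_Jp_apply, map_ofNat]

theorem Jz_map_conj : (Jz d).map (starRingEnd ℂ) = Jz d := by
  ext a b
  simp only [map_apply, Jz, diagonal_apply]
  split_ifs <;> simp [map_ofNat]

theorem neg_I_smul_Jy_mul_Jx_sub :
    (-Complex.I • Jy d) * Jx d - Jx d * (-Complex.I • Jy d) = -Jz d := by
  rw [smul_mul_assoc, mul_smul_comm, ← smul_sub, ← neg_sub, Jx_mul_Jy_sub, smul_neg, smul_smul]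
  simp

theorem neg_I_smul_Jy_mul_Jz_sub :
    (-Complex.I • Jy d) * Jz d - Jz d * (-Complex.I • Jy d) = Jx d := by
  rw [smul_mul_assoc, mul_smul_comm, ← smul_sub, Jy_mul_Jz_sub, smul_smul]
  simp

end SpinMatrices

-- Matrices carry no global norm; `exp` only depends on the topology, so any algebra norm will do.
attribute [local instance] Matrix.linftyOpNormedRing Matrix.linftyOpNormedAlgebra

theorem stmt_14_general (d : ℕ) :
    ∀ K ∈ ({Jx d, Jy d, Jz d} : Set (Matrix (Fin d) (Fin d) ℂ)),
      K.map (starRingEnd ℂ) =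
        -(NormedSpace.exp ((-Complex.I * (Real.pi : ℂ)) • Jy d) * K *
          NormedSpace.exp ((Complex.I * (Real.pi : ℂ)) • Jy d)) := by
  set A := -Complex.I • Jy d
  have hexp_neg : (-Complex.I * (Real.pi : ℂ)) • Jy d = Real.pi • A := by
    rw [← Complex.coe_smul, smul_smul, mul_comm]
  have hexp_pos : (Complex.I * (Real.pi : ℂ)) • Jy d = -(Real.pi • A) := by
    rw [← Complex.coe_smul, smul_smul, ← neg_smul]
    congr 1
    ring
  have hx : exp (Real.pi • A) * Jx d * exp (-(Real.pi • A)) = -Jx d :=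
    exp_pi_smul_mul_mul_exp_neg_pi_smul_of_commutators neg_I_smul_Jy_mul_Jx_sub
      neg_I_smul_Jy_mul_Jz_sub
  have hy : exp (Real.pi • A) * Jy d * exp (-(Real.pi • A)) = Jy d := by
    have hcomm : Commute (Jy d) (-(Real.pi • A)) :=
      (((Commute.refl (Jy d)).smul_right (-Complex.I)).smul_right Real.pi).neg_right
    have h := SemiconjBy.exp_neg_mul_mul_exp_eq_self hcomm
    rwa [neg_neg] at h
  have hz : exp (Real.pi • A) * Jz d * exp (-(Real.pi • A)) = -Jz d :=
    exp_pi_smul_mul_mul_exp_neg_pi_smul_of_commutators (Q := -Jx d)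
      (by rw [neg_I_smul_Jy_mul_Jz_sub, neg_neg])
      (by rw [mul_neg, neg_mul, sub_neg_eq_add, neg_add_eq_sub, ← neg_sub, neg_I_smul_Jy_mul_Jx_sub,
        neg_neg])
  rw [hexp_neg, hexp_pos]
  rintro K (rfl | rfl | rfl)
  · rw [Jx_map_conj, hx, neg_neg]
  · rw [Jy_map_conj, hy]
  · rw [Jz_map_conj, hz, neg_neg]

theorem stmt_14 (d : ℕ) (hd : 2 ≤ d) :
    ∀ K ∈ ({Jx d, Jy d, Jz d} : Set (Matrix (Fin d) (Fin d) ℂ)),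
      K.map (starRingEnd ℂ) =
        -(NormedSpace.exp ((-Complex.I * (Real.pi : ℂ)) • Jy d) * K *
          NormedSpace.exp ((Complex.I * (Real.pi : ℂ)) • Jy d)) :=
  stmt_14_general d
end
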